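/- There exist constants C and x₀ such that for all x ≥ x₀, the number K₂(x) of composite integers n ≤ x that have exactly two distinct prime factors and satisfy rad(φ(n)) ∣ n − 1 is at most x^{1/2} · exp( (2·(2 log x)^{1/2} / log log x) · (1 + C/ log log x) ). -/

import Mathlib

open Finset

def rad (n : ℕ) : ℕ := ∏ p ∈ n.primeFactors, p

/-!
If `n` has two prime factors and `rad φ(n) ∣ n - 1`, then `n = p q` is squarefree and `p - 1`,
`q - 1` have the same prime factors. So `K₂(x)` is at most the number of pairs `(a, b)` with
`a b ≤ x` and `rad a = rad b`. Writing `a = r t`, `b = r s` with `r = rad a` and `u = t s`, such a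
pair is determined by `u`, a divisor `t` of `u` and a multiple `r` of `rad u` with `r² u ≤ x`; there
are at most `√x · ∑_{u ≤ x} τ(u) / (√u rad u)` of these. The weight `τ(u) / (√u rad u)` is
multiplicative with Euler factors `1 + O(p^(-3/2))`, so the sum is bounded and `K₂(x) ≪ √x`.
-/

lemma rad_dvd_self (n : ℕ) : rad n ∣ n := Nat.prod_primeFactors_dvd n

lemma rad_pos (n : ℕ) : 0 < rad n :=
  prod_pos fun _ hp => (Nat.prime_of_mem_primeFactors hp).pos

lemma rad_mul_of_coprime {m n : ℕ} (h : m.Coprime n) : rad (m * n) = rad m * rad n := by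
  rw [rad, rad, rad, Nat.Coprime.primeFactors_mul h, prod_union h.disjoint_primeFactors]

lemma rad_prime_pow {p e : ℕ} (hp : p.Prime) (he : e ≠ 0) : rad (p ^ e) = p := by
  rw [rad, Nat.primeFactors_prime_pow he hp, prod_singleton]

lemma Nat.Prime.dvd_rad {ℓ n : ℕ} (hℓ : ℓ.Prime) (hn : n ≠ 0) (h : ℓ ∣ n) : ℓ ∣ rad n :=
  dvd_prod_of_mem _ (Nat.mem_primeFactors.mpr ⟨hℓ, h, hn⟩)

lemma rad_dvd_rad_of_primeFactors_subset {m n : ℕ} (h : m.primeFactors ⊆ n.primeFactors) :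
    rad m ∣ rad n :=
  prod_dvd_prod_of_subset _ _ _ h

lemma Nat.Prime.dvd_sub_one_of_dvd_totient {ℓ n : ℕ} (hℓ : ℓ.Prime) (hn : n ≠ 0)
    (h : rad n.totient ∣ n - 1) (hdvd : ℓ ∣ n.totient) : ℓ ∣ n - 1 :=
  (hℓ.dvd_rad (Nat.totient_pos.mpr (Nat.pos_of_ne_zero hn)).ne' hdvd).trans h

/-- A prime whose square divides `n` divides `φ n`, hence both `n` and `n - 1`. -/
lemma squarefree_of_rad_totient_dvd_sub_one {n : ℕ} (hn : n ≠ 0) (h : rad n.totient ∣ n - 1) :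
    Squarefree n := by
  rw [Nat.squarefree_iff_prime_squarefree]
  intro p hp hpp
  have hp_totient : p ∣ n.totient := by
    have := Nat.totient_dvd_of_dvd hpp
    rw [← sq, Nat.totient_prime_pow hp two_pos] at this
    exact (dvd_mul_right p (p - 1)).trans (by simpa using this)
  have hp_sub : p ∣ n - 1 := hp.dvd_sub_one_of_dvd_totient hn h hp_totient
  have hp_one : p ∣ n - (n - 1) := Nat.dvd_sub ((dvd_mul_right p p).trans hpp) hp_sub
  rw [Nat.sub_sub_self (Nat.one_le_iff_ne_zero.mpr hn)] at hp_one
  exact hp.one_lt.ne' (Nat.dvd_one.mp hp_one)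

/-- A prime `ℓ ∣ q - 1` divides `φ(p q) = (p - 1)(q - 1)`, hence `p q - 1 = p (q - 1) + (p - 1)`,
and so `p - 1`. -/
lemma primeFactors_sub_one_subset {p q : ℕ} (hp : p.Prime) (hq : q.Prime) (hpq : p ≠ q)
    (h : rad (p * q).totient ∣ p * q - 1) : (q - 1).primeFactors ⊆ (p - 1).primeFactors := by
  intro ℓ hℓ
  obtain ⟨hℓ_prime, hℓ_dvd, -⟩ := Nat.mem_primeFactors.mp hℓ
  have htotient : (p * q).totient = (p - 1) * (q - 1) := by
    rw [Nat.totient_mul ((Nat.coprime_primes hp hq).mpr hpq), Nat.totient_prime hp,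
      Nat.totient_prime hq]
  have hsub : ℓ ∣ p * q - 1 :=
    hℓ_prime.dvd_sub_one_of_dvd_totient (Nat.mul_ne_zero hp.ne_zero hq.ne_zero) h
      (htotient ▸ dvd_mul_of_dvd_right hℓ_dvd _)
  have hsplit : p * q - 1 = p * (q - 1) + (p - 1) := by
    have hpq_pos : 1 ≤ p * q := Nat.one_le_iff_ne_zero.mpr (Nat.mul_ne_zero hp.ne_zero hq.ne_zero)
    zify [hp.one_le, hq.one_le, hpq_pos]
    ring
  rw [hsplit] at hsub
  exact Nat.mem_primeFactors.mpr ⟨hℓ_prime,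
    (Nat.dvd_add_right (dvd_mul_of_dvd_right hℓ_dvd _)).mp hsub, (Nat.sub_pos_of_lt hp.one_lt).ne'⟩

lemma exists_primes_eq_mul_of_rad_totient_dvd_sub_one {n : ℕ} (hω : n.primeFactors.card = 2)
    (h : rad n.totient ∣ n - 1) :
    ∃ p q, p.Prime ∧ q.Prime ∧ n = p * q ∧ (p - 1).primeFactors = (q - 1).primeFactors := by
  have hn : n ≠ 0 := by rintro rfl; simp at hω
  obtain ⟨p, q, hpq, hpf⟩ := card_eq_two.mp hω
  have hp : p.Prime := Nat.prime_of_mem_primeFactors (hpf ▸ mem_insert_self p {q})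
  have hq : q.Prime :=
    Nat.prime_of_mem_primeFactors (hpf ▸ mem_insert_of_mem (mem_singleton_self q))
  have hn_eq : n = p * q := by
    rw [← Nat.prod_primeFactors_of_squarefree (squarefree_of_rad_totient_dvd_sub_one hn h), hpf,
      prod_pair hpq]
  subst hn_eq
  exact ⟨p, q, hp, hq, rfl,
    subset_antisymm (primeFactors_sub_one_subset hq hp hpq.symm (by rwa [mul_comm]))
      (primeFactors_sub_one_subset hp hq hpq h)⟩

lemma Nat.primeFactors_ordCompl_subset_erase {u p : ℕ} (hp : p.Prime) (hu : u ≠ 0) :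
    (ordCompl[p] u).primeFactors ⊆ u.primeFactors.erase p := fun ℓ hℓ =>
  mem_erase.mpr ⟨by rintro rfl; exact Nat.not_dvd_ordCompl hp hu (Nat.dvd_of_mem_primeFactors hℓ),
    Nat.primeFactors_mono (Nat.ordCompl_dvd u p) hu hℓ⟩

section EulerProduct

variable {R : Type*} [CommSemiring R] [PartialOrder R] [IsOrderedRing R] {f : ℕ → R}

lemma sum_Icc_filter_primeFactors_subset_empty_le (hf0 : ∀ n, 0 ≤ f n) (hf1 : f 1 = 1) (N : ℕ) :
    ∑ u ∈ Icc 1 N with u.primeFactors ⊆ ∅, f u ≤ 1 := by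
  have : {u ∈ Icc 1 N | u.primeFactors ⊆ ∅} ⊆ {1} := fun u hu => by
    simp only [mem_filter, mem_Icc, subset_empty, Nat.primeFactors_eq_empty] at hu
    rw [mem_singleton]
    omega
  simpa [hf1] using sum_le_sum_of_subset_of_nonneg this fun u _ _ => hf0 u

/-- Write `u = p ^ e * m` with `p ∤ m`. -/
lemma sum_Icc_filter_primeFactors_subset_insert_le (hf0 : ∀ n, 0 ≤ f n)
    (hf : ∀ m n, m.Coprime n → f (m * n) = f m * f n) (N : ℕ) {p : ℕ} (hp : p.Prime)
    (P : Finset ℕ) :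
    ∑ u ∈ Icc 1 N with u.primeFactors ⊆ insert p P, f u ≤
      (∑ e ∈ range (N + 1), f (p ^ e)) * ∑ m ∈ Icc 1 N with m.primeFactors ⊆ P, f m := by
  let split : ℕ → ℕ × ℕ := fun u => (u.factorization p, ordCompl[p] u)
  have hsplit_inj : Set.InjOn split ({u ∈ Icc 1 N | u.primeFactors ⊆ insert p P} : Finset ℕ) :=
    fun u _ v _ huv => by
      simp only [split, Prod.mk.injEq] at huv
      rw [← Nat.ordProj_mul_ordCompl_eq_self u p, ← Nat.ordProj_mul_ordCompl_eq_self v p, huv.2,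
        huv.1]
  have hsplit_mem : ∀ u ∈ {u ∈ Icc 1 N | u.primeFactors ⊆ insert p P},
      split u ∈ range (N + 1) ×ˢ {m ∈ Icc 1 N | m.primeFactors ⊆ P} := by
    intro u hu
    rw [mem_filter, mem_Icc] at hu
    obtain ⟨⟨hu1, huN⟩, hupf⟩ := hu
    have hu0 : u ≠ 0 := by omega
    simp only [split, mem_product, mem_range, mem_filter, mem_Icc]
    exact ⟨by have := Nat.factorization_lt p hu0; omega,
      ⟨Nat.ordCompl_pos p hu0, (Nat.ordCompl_le u p).trans huN⟩,
      (Nat.primeFactors_ordCompl_subset_erase hp hu0).trans (subset_insert_iff.mp hupf)⟩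
  calc ∑ u ∈ Icc 1 N with u.primeFactors ⊆ insert p P, f u
      = ∑ u ∈ Icc 1 N with u.primeFactors ⊆ insert p P, f (p ^ (split u).1) * f (split u).2 := by
        refine sum_congr rfl fun u hu => ?_
        have hu0 : u ≠ 0 := by rw [mem_filter, mem_Icc] at hu; omega
        conv_lhs => rw [← Nat.ordProj_mul_ordCompl_eq_self u p]
        exact hf _ _ ((Nat.coprime_ordCompl hp hu0).pow_left _)
    _ = ∑ y ∈ image split {u ∈ Icc 1 N | u.primeFactors ⊆ insert p P}, f (p ^ y.1) * f y.2 := by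
        rw [sum_image hsplit_inj]
    _ ≤ ∑ y ∈ range (N + 1) ×ˢ {m ∈ Icc 1 N | m.primeFactors ⊆ P}, f (p ^ y.1) * f y.2 :=
        sum_le_sum_of_subset_of_nonneg (image_subset_iff.mpr hsplit_mem)
          fun y _ _ => mul_nonneg (hf0 _) (hf0 _)
    _ = (∑ e ∈ range (N + 1), f (p ^ e)) * ∑ m ∈ Icc 1 N with m.primeFactors ⊆ P, f m := by
        rw [sum_product, sum_mul_sum]

lemma sum_Icc_filter_primeFactors_subset_le_prod (hf0 : ∀ n, 0 ≤ f n) (hf1 : f 1 = 1)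
    (hf : ∀ m n, m.Coprime n → f (m * n) = f m * f n) (N : ℕ) {P : Finset ℕ}
    (hP : ∀ p ∈ P, p.Prime) :
    ∑ u ∈ Icc 1 N with u.primeFactors ⊆ P, f u ≤ ∏ p ∈ P, ∑ e ∈ range (N + 1), f (p ^ e) := by
  induction P using Finset.induction_on with
  | empty => simpa using sum_Icc_filter_primeFactors_subset_empty_le hf0 hf1 N
  | @insert p P hpP ih =>
    have hp : p.Prime := hP p (mem_insert_self p P)
    rw [prod_insert hpP]
    exact (sum_Icc_filter_primeFactors_subset_insert_le hf0 hf N hp P).trans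
      (mul_le_mul_of_nonneg_left (ih fun q hq => hP q (mem_insert_of_mem hq))
        (sum_nonneg fun e _ => hf0 _))

lemma sum_Icc_le_prod_primesBelow (hf0 : ∀ n, 0 ≤ f n) (hf1 : f 1 = 1)
    (hf : ∀ m n, m.Coprime n → f (m * n) = f m * f n) (N : ℕ) :
    ∑ u ∈ Icc 1 N, f u ≤ ∏ p ∈ Nat.primesBelow (N + 1), ∑ e ∈ range (N + 1), f (p ^ e) := by
  have hsmooth : {u ∈ Icc 1 N | u.primeFactors ⊆ Nat.primesBelow (N + 1)} = Icc 1 N := by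
    refine filter_true_of_mem fun u hu ℓ hℓ =>
      Nat.mem_primesBelow.mpr ⟨?_, Nat.prime_of_mem_primeFactors hℓ⟩
    have := Nat.le_of_mem_primeFactors hℓ
    have := (mem_Icc.mp hu).2
    omega
  rw [← hsmooth]
  exact sum_Icc_filter_primeFactors_subset_le_prod hf0 hf1 hf N
    fun p hp => Nat.prime_of_mem_primesBelow hp

end EulerProduct

lemma sum_range_succ_mul_pow_le {x : ℝ} (hx0 : 0 ≤ x) (hx1 : x < 1) (N : ℕ) :
    ∑ e ∈ range N, ((e : ℝ) + 1) * x ^ e ≤ 1 / (1 - x) ^ 2 := by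
  have h := hasSum_choose_mul_geometric_of_norm_lt_one 1 (r := x)
    (by rwa [Real.norm_of_nonneg hx0])
  simp only [Nat.choose_one_right, Nat.cast_add, Nat.cast_one] at h
  exact sum_le_hasSum _ (fun e _ => by positivity) h

lemma one_div_one_sub_sq_sub_one_le {x : ℝ} (hx0 : 0 ≤ x) (hx : x ^ 2 ≤ 1 / 2) :
    1 / (1 - x) ^ 2 - 1 ≤ 20 * x := by
  have hx1 : x ≤ 3 / 4 := by nlinarith
  rw [sub_le_iff_le_add, div_le_iff₀ (by nlinarith)]
  nlinarith [mul_nonneg hx0 (mul_nonneg (sub_nonneg.mpr hx1) (by linarith : (0 : ℝ) ≤ 6 / 5 - x))]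

/-- `2 / √n - 2 / √(n + 1) = 2 / (√n √(n + 1) (√n + √(n + 1)))`. -/
lemma inv_mul_sqrt_succ_le_sub (n : ℕ) (hn : 1 ≤ n) :
    (((n : ℝ) + 1) * √((n : ℝ) + 1))⁻¹ ≤ 2 / √n - 2 / √((n : ℝ) + 1) := by
  set a := √(n : ℝ)
  set b := √((n : ℝ) + 1)
  have ha : 0 < a := Real.sqrt_pos.mpr (by exact_mod_cast hn)
  have hab : a ≤ b := Real.sqrt_le_sqrt (by linarith)
  have hb : 0 < b := ha.trans_le hab
  have ha2 : a ^ 2 = n := Real.sq_sqrt (Nat.cast_nonneg n)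
  have hb2 : b ^ 2 = n + 1 := Real.sq_sqrt (by positivity)
  have htelescope : 2 / a - 2 / b = 2 / (a * b * (a + b)) := by
    rw [div_sub_div _ _ ha.ne' hb.ne', div_eq_div_iff (by positivity) (by positivity)]
    linear_combination (2 * a * b) * (hb2 - ha2)
  have hcube : a * b * (a + b) ≤ 2 * (b ^ 2 * b) := by
    calc a * b * (a + b) ≤ b * b * (b + b) := by gcongr
      _ = 2 * (b ^ 2 * b) := by ring
  rw [htelescope, ← hb2, inv_eq_one_div, div_le_div_iff₀ (by positivity) (by positivity)]
  linarith

lemma sum_Icc_inv_mul_sqrt_le_two_sub {N : ℕ} (hN : 1 ≤ N) :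
    ∑ n ∈ Icc 2 N, ((n : ℝ) * √n)⁻¹ ≤ 2 - 2 / √N := by
  induction N, hN using Nat.le_induction with
  | base => norm_num
  | succ M hM ih =>
    rw [sum_Icc_succ_top (by omega), Nat.cast_succ]
    linarith [inv_mul_sqrt_succ_le_sub M hM]

lemma sum_Icc_inv_mul_sqrt_le (N : ℕ) : ∑ n ∈ Icc 2 N, ((n : ℝ) * √n)⁻¹ ≤ 2 := by
  rcases Nat.eq_zero_or_pos N with rfl | hN
  · simp
  · linarith [sum_Icc_inv_mul_sqrt_le_two_sub hN, (by positivity : 0 ≤ 2 / √(N : ℝ))]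

lemma prod_primesBelow_one_add_le (N : ℕ) :
    ∏ p ∈ Nat.primesBelow (N + 1), (1 + 20 * ((p : ℝ) * √p)⁻¹) ≤ Real.exp 40 := by
  have hsub : Nat.primesBelow (N + 1) ⊆ Icc 2 N := fun p hp => by
    rw [Nat.mem_primesBelow] at hp
    exact mem_Icc.mpr ⟨hp.2.two_le, by omega⟩
  calc ∏ p ∈ Nat.primesBelow (N + 1), (1 + 20 * ((p : ℝ) * √p)⁻¹)
      ≤ Real.exp (∑ p ∈ Nat.primesBelow (N + 1), 20 * ((p : ℝ) * √p)⁻¹) :=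
        Real.prod_one_add_le_exp_sum _ fun p => by positivity
    _ ≤ Real.exp (20 * ∑ n ∈ Icc 2 N, ((n : ℝ) * √n)⁻¹) := by
        rw [← mul_sum]
        gcongr
    _ ≤ Real.exp (20 * 2) := by grw [sum_Icc_inv_mul_sqrt_le N]
    _ = Real.exp 40 := by norm_num

noncomputable def divisorsRadWeight (u : ℕ) : ℝ := #u.divisors / (√u * rad u)

lemma divisorsRadWeight_nonneg (u : ℕ) : 0 ≤ divisorsRadWeight u := by
  unfold divisorsRadWeight
  positivity

lemma divisorsRadWeight_one : divisorsRadWeight 1 = 1 := by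
  simp [divisorsRadWeight, rad]

lemma divisorsRadWeight_mul {m n : ℕ} (h : m.Coprime n) :
    divisorsRadWeight (m * n) = divisorsRadWeight m * divisorsRadWeight n := by
  simp only [divisorsRadWeight, Nat.Coprime.card_divisors_mul h, rad_mul_of_coprime h,
    Nat.cast_mul, Real.sqrt_mul (Nat.cast_nonneg _)]
  ring

lemma divisorsRadWeight_prime_pow {p e : ℕ} (hp : p.Prime) (he : e ≠ 0) :
    divisorsRadWeight (p ^ e) = (e + 1) * (√p)⁻¹ ^ e / p := by
  have hsqrt : √((p : ℝ) ^ e) = √p ^ e := by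
    rw [← Real.sqrt_sq (pow_nonneg (Real.sqrt_nonneg _) e), ← pow_mul, mul_comm, pow_mul,
      Real.sq_sqrt (Nat.cast_nonneg p)]
  rw [divisorsRadWeight, rad_prime_pow hp he, Nat.divisors_prime_pow hp, card_map, card_range,
    Nat.cast_pow, hsqrt, inv_pow]
  push_cast
  field_simp

lemma sum_range_divisorsRadWeight_prime_pow_le {p : ℕ} (hp : p.Prime) (N : ℕ) :
    ∑ e ∈ range (N + 1), divisorsRadWeight (p ^ e) ≤ 1 + 20 * ((p : ℝ) * √p)⁻¹ := by
  set x := (√(p : ℝ))⁻¹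
  have hp0 : (0 : ℝ) < p := by exact_mod_cast hp.pos
  have hx0 : 0 ≤ x := by positivity
  have hx2 : x ^ 2 ≤ 1 / 2 := by
    rw [inv_pow, Real.sq_sqrt hp0.le, one_div]
    exact inv_anti₀ two_pos (by exact_mod_cast hp.two_le)
  have hx1 : x < 1 := by nlinarith
  have hweight : ∑ e ∈ range (N + 1), divisorsRadWeight (p ^ e)
      = 1 + (∑ e ∈ range (N + 1), ((e : ℝ) + 1) * x ^ e - 1) / p := by
    rw [sum_range_succ', sum_range_succ', pow_zero, divisorsRadWeight_one, Nat.cast_zero, zero_add,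
      pow_zero, mul_one, add_sub_cancel_right, sum_div, add_comm]
    refine congrArg _ (sum_congr rfl fun e _ => ?_)
    rw [divisorsRadWeight_prime_pow hp e.succ_ne_zero, Nat.cast_succ]
  calc ∑ e ∈ range (N + 1), divisorsRadWeight (p ^ e)
      = 1 + (∑ e ∈ range (N + 1), ((e : ℝ) + 1) * x ^ e - 1) / p := hweight
    _ ≤ 1 + (1 / (1 - x) ^ 2 - 1) / p := by grw [sum_range_succ_mul_pow_le hx0 hx1]
    _ ≤ 1 + 20 * x / p := by grw [one_div_one_sub_sq_sub_one_le hx0 hx2]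
    _ = 1 + 20 * ((p : ℝ) * √p)⁻¹ := by
        rw [mul_inv, mul_div_assoc, div_eq_mul_inv, mul_comm x]

lemma sum_Icc_divisorsRadWeight_le (X : ℕ) : ∑ u ∈ Icc 1 X, divisorsRadWeight u ≤ Real.exp 40 :=
  calc ∑ u ∈ Icc 1 X, divisorsRadWeight u
      ≤ ∏ p ∈ Nat.primesBelow (X + 1), ∑ e ∈ range (X + 1), divisorsRadWeight (p ^ e) :=
        sum_Icc_le_prod_primesBelow divisorsRadWeight_nonneg divisorsRadWeight_one
          (fun _ _ => divisorsRadWeight_mul) X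
    _ ≤ ∏ p ∈ Nat.primesBelow (X + 1), (1 + 20 * ((p : ℝ) * √p)⁻¹) :=
        prod_le_prod (fun _ _ => sum_nonneg fun _ _ => divisorsRadWeight_nonneg _)
          fun _ hp => sum_range_divisorsRadWeight_prime_pow_le (Nat.prime_of_mem_primesBelow hp) X
    _ ≤ Real.exp 40 := prod_primesBelow_one_add_le X

def samePrimeFactorsPairs (X : ℕ) : Finset (ℕ × ℕ) :=
  {ab ∈ Icc 1 X ×ˢ Icc 1 X | ab.1 * ab.2 ≤ X ∧ ab.1.primeFactors = ab.2.primeFactors}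

lemma card_filter_rad_totient_dvd_le_card_samePrimeFactorsPairs (X : ℕ) :
    #{n ∈ Icc 1 X | n.primeFactors.card = 2 ∧ rad n.totient ∣ n - 1} ≤
      #(samePrimeFactorsPairs X) := by
  refine card_le_card_of_surjOn (fun ab => (ab.1 + 1) * (ab.2 + 1)) fun n hn => ?_
  rw [mem_coe, mem_filter, mem_Icc] at hn
  obtain ⟨⟨-, hnX⟩, hω, h⟩ := hn
  obtain ⟨p, q, hp, hq, rfl, hpq⟩ := exists_primes_eq_mul_of_rad_totient_dvd_sub_one hω h
  refine ⟨(p - 1, q - 1), ?_, by simp [Nat.sub_add_cancel hp.one_le, Nat.sub_add_cancel hq.one_le]⟩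
  have := hp.two_le
  have := hq.two_le
  have : (p - 1) * (q - 1) ≤ p * q := Nat.mul_le_mul (Nat.sub_le p 1) (Nat.sub_le q 1)
  have : p ≤ p * q := Nat.le_mul_of_pos_right p hq.pos
  have : q ≤ p * q := Nat.le_mul_of_pos_left q hp.pos
  simp only [samePrimeFactorsPairs, mem_coe, mem_filter, mem_product, mem_Icc, hpq, and_true]
  omega

/-- The pair with common radical `r` is recovered from `⟨u, t, r⟩` as `(r t, r (u / t))`. -/
def radicalTriples (X : ℕ) : Finset (Σ _ : ℕ, ℕ × ℕ) :=
  (Icc 1 X).sigma fun u => u.divisors ×ˢ {r ∈ Icc 1 X | rad u ∣ r ∧ r * r * u ≤ X}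

lemma card_samePrimeFactorsPairs_le_card_radicalTriples (X : ℕ) :
    #(samePrimeFactorsPairs X) ≤ #(radicalTriples X) := by
  refine card_le_card_of_surjOn (fun x => (x.2.2 * x.2.1, x.2.2 * (x.1 / x.2.1))) ?_
  rintro ⟨a, b⟩ hab
  simp only [samePrimeFactorsPairs, mem_coe, mem_filter, mem_product, mem_Icc] at hab
  obtain ⟨⟨⟨ha1, haX⟩, hb1, hbX⟩, habX, hpf⟩ := hab
  have ha0 : a ≠ 0 := by omega
  have hb0 : b ≠ 0 := by omega
  obtain ⟨t, hat⟩ := rad_dvd_self a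
  obtain ⟨s, hbs⟩ : rad a ∣ b := by rw [rad, hpf]; exact rad_dvd_self b
  have ht0 : t ≠ 0 := by rintro rfl; omega
  have hs0 : s ≠ 0 := by rintro rfl; omega
  have hts : (t * s).primeFactors ⊆ a.primeFactors := by
    rw [Nat.primeFactors_mul ht0 hs0, hpf]
    exact union_subset (hpf ▸ Nat.primeFactors_mono (Dvd.intro_left _ hat.symm) ha0)
      (Nat.primeFactors_mono (Dvd.intro_left _ hbs.symm) hb0)
  refine ⟨⟨t * s, t, rad a⟩, ?_,
    by simp [Nat.mul_div_cancel_left s (Nat.pos_of_ne_zero ht0), ← hat, ← hbs]⟩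
  have hta : t ≤ a := Nat.le_of_dvd (by omega) (Dvd.intro_left _ hat.symm)
  have hsb : s ≤ b := Nat.le_of_dvd (by omega) (Dvd.intro_left _ hbs.symm)
  have hra : rad a ≤ a := Nat.le_of_dvd (by omega) (rad_dvd_self a)
  have hts_le : t * s ≤ a * b := Nat.mul_le_mul hta hsb
  have hrr : a * b = rad a * rad a * (t * s) := by
    conv_lhs => rw [hat, hbs]
    ring
  simp only [radicalTriples, coe_sigma, Set.mem_sigma_iff, coe_Icc, Set.mem_Icc, coe_product,
    Set.mem_prod, mem_coe, Nat.mem_divisors, mem_filter, mem_Icc]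
  exact ⟨⟨Nat.one_le_iff_ne_zero.mpr (Nat.mul_ne_zero ht0 hs0), by omega⟩,
    ⟨Dvd.intro s rfl, Nat.mul_ne_zero ht0 hs0⟩,
    ⟨rad_pos a, by omega⟩, rad_dvd_rad_of_primeFactors_subset hts, by omega⟩

lemma card_filter_rad_dvd_le (X : ℕ) {u : ℕ} (hu : 0 < u) :
    (#{r ∈ Icc 1 X | rad u ∣ r ∧ r * r * u ≤ X} : ℝ) ≤ √X / (√u * rad u) := by
  have hsub : {r ∈ Icc 1 X | rad u ∣ r ∧ r * r * u ≤ X} ⊆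
      {r ∈ Ioc 0 (Nat.sqrt (X / u)) | rad u ∣ r} := by
    intro r hr
    simp only [mem_filter, mem_Icc, mem_Ioc] at hr ⊢
    exact ⟨⟨by omega, Nat.le_sqrt.mpr ((Nat.le_div_iff_mul_le hu).mpr hr.2.2)⟩, hr.2.1⟩
  have hrad : (0 : ℝ) < rad u := by exact_mod_cast rad_pos u
  calc (#{r ∈ Icc 1 X | rad u ∣ r ∧ r * r * u ≤ X} : ℝ)
      ≤ (Nat.sqrt (X / u) / rad u : ℕ) := by
        rw [← Nat.Ioc_filter_dvd_card_eq_div]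
        exact_mod_cast card_le_card hsub
    _ ≤ (Nat.sqrt (X / u) : ℝ) / rad u := Nat.cast_div_le
    _ ≤ √((X : ℝ) / u) / rad u := by
        gcongr
        exact Real.nat_sqrt_le_real_sqrt.trans (Real.sqrt_le_sqrt Nat.cast_div_le)
    _ = √X / (√u * rad u) := by rw [Real.sqrt_div' _ (Nat.cast_nonneg u), div_div]

lemma card_radicalTriples_le (X : ℕ) : (#(radicalTriples X) : ℝ) ≤ Real.exp 40 * √X := by
  rw [radicalTriples, card_sigma]
  push_cast
  calc ∑ u ∈ Icc 1 X, (#(u.divisors ×ˢ {r ∈ Icc 1 X | rad u ∣ r ∧ r * r * u ≤ X}) : ℝ)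
      ≤ ∑ u ∈ Icc 1 X, #u.divisors * (√X / (√u * rad u)) := by
        refine sum_le_sum fun u hu => ?_
        rw [card_product, Nat.cast_mul]
        gcongr
        exact card_filter_rad_dvd_le X (mem_Icc.mp hu).1
    _ = √X * ∑ u ∈ Icc 1 X, divisorsRadWeight u := by
        rw [mul_sum]
        refine sum_congr rfl fun u _ => ?_
        rw [divisorsRadWeight]
        ring
    _ ≤ √X * Real.exp 40 := by grw [sum_Icc_divisorsRadWeight_le]
    _ = Real.exp 40 * √X := mul_comm _ _

lemma card_filter_rad_totient_dvd_le (X : ℕ) :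
    (#{n ∈ Icc 1 X | n.primeFactors.card = 2 ∧ rad n.totient ∣ n - 1} : ℝ) ≤
      Real.exp 40 * √X := by
  refine le_trans ?_ (card_radicalTriples_le X)
  exact_mod_cast (card_filter_rad_totient_dvd_le_card_samePrimeFactorsPairs X).trans
    (card_samePrimeFactorsPairs_le_card_radicalTriples X)

lemma forty_le_two_mul_sqrt_div_log {T : ℝ} (hT : 6400 ^ 2 ≤ T) :
    40 ≤ 2 * √(2 * T) / Real.log T := by
  set r := √√T
  have hT0 : 0 ≤ T := le_trans (by positivity) hT
  have hr : 80 ≤ r := Real.le_sqrt_of_sq_le (Real.le_sqrt_of_sq_le (by linarith))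
  have hTr : T = r ^ 4 := by
    rw [show 4 = 2 * 2 by rfl, pow_mul, Real.sq_sqrt (Real.sqrt_nonneg T), Real.sq_sqrt hT0]
  have hlog : Real.log T ≤ 4 * r := by
    rw [hTr, Real.log_pow]
    push_cast
    linarith [Real.log_le_sub_one_of_pos (by linarith : 0 < r)]
  have hlog_pos : 0 < Real.log T := Real.log_pos (by linarith)
  have hsqrt : r ^ 2 ≤ √(2 * T) := by
    rw [Real.le_sqrt (by positivity) (by positivity), hTr]
    nlinarith [pow_nonneg (by linarith : (0 : ℝ) ≤ r) 4]
  rw [le_div_iff₀ hlog_pos]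
  nlinarith

theorem K_two_upper_bound :
    ∃ C : ℝ, ∃ x₀ : ℝ, ∀ x : ℝ, x₀ ≤ x →
      ((((Finset.Icc 1 ⌊x⌋₊).filter
        (fun n => 1 < n ∧ ¬ n.Prime ∧ n.primeFactors.card = 2 ∧
          rad n.totient ∣ n - 1)).card : ℝ))
        ≤ x ^ ((1 : ℝ) / 2) *
          Real.exp ((2 * (2 * Real.log x) ^ ((1 : ℝ) / 2) / Real.log (Real.log x)) *
            (1 + C / Real.log (Real.log x))) := by
  refine ⟨0, Real.exp (6400 ^ 2), fun x hx => ?_⟩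
  have hx0 : 0 < x := (Real.exp_pos _).trans_le hx
  have hlog : 6400 ^ 2 ≤ Real.log x := (Real.le_log_iff_exp_le hx0).mpr hx
  calc ((((Icc 1 ⌊x⌋₊).filter (fun n => 1 < n ∧ ¬ n.Prime ∧ n.primeFactors.card = 2 ∧
          rad n.totient ∣ n - 1)).card : ℝ))
      ≤ #{n ∈ Icc 1 ⌊x⌋₊ | n.primeFactors.card = 2 ∧ rad n.totient ∣ n - 1} :=
        Nat.cast_le.mpr <| card_le_card <| monotone_filter_right _ fun _ _ h => h.2.2
    _ ≤ Real.exp 40 * √⌊x⌋₊ := card_filter_rad_totient_dvd_le _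
    _ ≤ Real.exp (2 * √(2 * Real.log x) / Real.log (Real.log x)) * √x := by
        gcongr
        · exact forty_le_two_mul_sqrt_div_log hlog
        · exact Nat.floor_le hx0.le
    _ = _ := by
        rw [zero_div, add_zero, mul_one, mul_comm, Real.sqrt_eq_rpow, Real.sqrt_eq_rpow]
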